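/- arXiv:2601.07803 — 5 statements merged into one kernel-verified Lean document; each statement's English description precedes it below -/
import Mathlib

section
/- Let V be a ℤ₂×ℤ₂-graded vector space over a field k of characteristic ≠ 2 with a bracket [·,·] of bi-degree (0,0), and let [a,b]_s := (−1)^(γ₁·δ₂)[a,b] be the twisted bracket for a ∈ G γ, b ∈ G δ. Then for all homogeneous a₁ ∈ G γ⁽¹⁾, a₂ ∈ G γ⁽²⁾, a₃ ∈ G γ⁽³⁾ one has the identity (−1)^⟨γ⁽¹⁾,γ⁽³⁾⟩[a₁,[a₂,a₃]] + (−1)^⟨γ⁽³⁾,γ⁽²⁾⟩[a₃,[a₁,a₂]] + (−1)^⟨γ⁽²⁾,γ⁽¹⁾⟩[a₂,[a₃,a₁]] = (−1)^α · ( (−1)^(p(a₁)p(a₃))[a₁,[a₂,a₃]_s]_s + (−1)^(p(a₃)p(a₂))[a₃,[a₁,a₂]_s]_s + (−1)^(p(a₂)p(a₁))[a₂,[a₃,a₁]_s]_s ), where α = γ₁⁽¹⁾γ₂⁽²⁾ + γ₁⁽²⁾γ₂⁽³⁾ + γ₁⁽³⁾γ₂⁽¹⁾ ∈ ZMod 2.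 In particular, the bi-graded Jacobi identity for [·,·] holds on all homogeneous triples if and only if the super Jacobi identity for [·,·]_s (with signs given by total parity p) holds on all homogeneous triples. -/
/-- The sign `(−1)^⟨γ,δ⟩` where `⟨γ,δ⟩ = γ₁δ₁ + γ₂δ₂ ∈ ZMod 2`. -/
def biSign (k : Type*) [Field k] (γ δ : ZMod 2 × ZMod 2) : k :=
  (-1 : k) ^ (γ.1 * δ.1 + γ.2 * δ.2).val

/-- The super sign `(−1)^(p(γ)p(δ))` built from the total parities `p(γ)=γ₁+γ₂`. -/
def parSign (k : Type*) [Field k] (γ δ : ZMod 2 × ZMod 2) : k :=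
  (-1 : k) ^ ((γ.1 + γ.2) * (δ.1 + δ.2)).val

/-- The twisted bracket `[a,b]ₛ = (−1)^(γ₁δ₂) [a,b]` on elements of bi-degrees `γ, δ`. -/
def twBr {k V : Type*} [Field k] [AddCommGroup V] [Module k V]
    (br : V →ₗ[k] V →ₗ[k] V) (γ δ : ZMod 2 × ZMod 2) (a b : V) : V :=
  ((-1 : k) ^ (γ.1 * δ.2).val) • br a b

/-!
Twisting both brackets in `[a, [b, c]]ₛ` multiplies `[a, [b, c]]` by a sign, and in each of the
three cyclic terms the product of this sign with the super sign differs from the bi-graded sign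
by the same factor `(−1)^α`: an identity between exponents in `ZMod 2`, checked on all `4³`
bi-degree triples. The two Jacobi identities are then equivalent because `(−1)^α ≠ 0`.
-/

lemma neg_one_pow_val_add {R : Type*} [Ring R] (x y : ZMod 2) :
    (-1 : R) ^ (x + y).val = (-1) ^ x.val * (-1) ^ y.val := by
  rw [ZMod.val_add, ← neg_one_pow_eq_pow_mod_two, pow_add]

lemma biSign_eq_twisted_parSign {k : Type*} [Field k] (γ₁ γ₂ γ₃ : ZMod 2 × ZMod 2) :
    biSign k γ₁ γ₃ = (-1 : k) ^ (γ₁.1 * γ₂.2 + γ₂.1 * γ₃.2 + γ₃.1 * γ₁.2).val *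
      (parSign k γ₁ γ₃ * ((-1) ^ (γ₁.1 * (γ₂ + γ₃).2).val * (-1) ^ (γ₂.1 * γ₃.2).val)) := by
  simp only [biSign, parSign, ← neg_one_pow_val_add]
  congr 2
  revert γ₁ γ₂ γ₃
  decide

lemma bigraded_jacobi_eq_smul_super_jacobi {k V : Type*} [Field k] [AddCommGroup V]
    [Module k V] (br : V →ₗ[k] V →ₗ[k] V) (γ₁ γ₂ γ₃ : ZMod 2 × ZMod 2) (a₁ a₂ a₃ : V) :
    biSign k γ₁ γ₃ • br a₁ (br a₂ a₃) + biSign k γ₃ γ₂ • br a₃ (br a₁ a₂)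
        + biSign k γ₂ γ₁ • br a₂ (br a₃ a₁)
      = ((-1 : k) ^ (γ₁.1 * γ₂.2 + γ₂.1 * γ₃.2 + γ₃.1 * γ₁.2).val) •
          (parSign k γ₁ γ₃ • twBr br γ₁ (γ₂ + γ₃) a₁ (twBr br γ₂ γ₃ a₂ a₃)
            + parSign k γ₃ γ₂ • twBr br γ₃ (γ₁ + γ₂) a₃ (twBr br γ₁ γ₂ a₁ a₂)
            + parSign k γ₂ γ₁ • twBr br γ₂ (γ₃ + γ₁) a₂ (twBr br γ₃ γ₁ a₃ a₁)) := by
  have hα₂ : γ₃.1 * γ₁.2 + γ₁.1 * γ₂.2 + γ₂.1 * γ₃.2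
      = γ₁.1 * γ₂.2 + γ₂.1 * γ₃.2 + γ₃.1 * γ₁.2 := by ring
  have hα₃ : γ₂.1 * γ₃.2 + γ₃.1 * γ₁.2 + γ₁.1 * γ₂.2
      = γ₁.1 * γ₂.2 + γ₂.1 * γ₃.2 + γ₃.1 * γ₁.2 := by ring
  rw [biSign_eq_twisted_parSign γ₁ γ₂ γ₃, biSign_eq_twisted_parSign γ₃ γ₁ γ₂,
    biSign_eq_twisted_parSign γ₂ γ₃ γ₁, hα₂, hα₃]
  simp only [twBr, map_smul, smul_add, smul_smul]

theorem bigraded_jacobi_vs_super_jacobi_general {k V : Type*} [Field k] [AddCommGroup V] [Module k V]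
    (G : ZMod 2 × ZMod 2 → Submodule k V)
    (br : V →ₗ[k] V →ₗ[k] V) :
    (∀ (γ₁ γ₂ γ₃ : ZMod 2 × ZMod 2), ∀ a₁ ∈ G γ₁, ∀ a₂ ∈ G γ₂, ∀ a₃ ∈ G γ₃,
        biSign k γ₁ γ₃ • br a₁ (br a₂ a₃) + biSign k γ₃ γ₂ • br a₃ (br a₁ a₂)
            + biSign k γ₂ γ₁ • br a₂ (br a₃ a₁)
          = ((-1 : k) ^ (γ₁.1 * γ₂.2 + γ₂.1 * γ₃.2 + γ₃.1 * γ₁.2).val) •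
              (parSign k γ₁ γ₃ • twBr br γ₁ (γ₂ + γ₃) a₁ (twBr br γ₂ γ₃ a₂ a₃)
                + parSign k γ₃ γ₂ • twBr br γ₃ (γ₁ + γ₂) a₃ (twBr br γ₁ γ₂ a₁ a₂)
                + parSign k γ₂ γ₁ • twBr br γ₂ (γ₃ + γ₁) a₂ (twBr br γ₃ γ₁ a₃ a₁))) ∧
    ((∀ (γ δ ρ : ZMod 2 × ZMod 2), ∀ a ∈ G γ, ∀ b ∈ G δ, ∀ c ∈ G ρ,
        biSign k γ ρ • br a (br b c) + biSign k ρ δ • br c (br a b)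
          + biSign k δ γ • br b (br c a) = 0) ↔
      (∀ (γ δ ρ : ZMod 2 × ZMod 2), ∀ a ∈ G γ, ∀ b ∈ G δ, ∀ c ∈ G ρ,
        parSign k γ ρ • twBr br γ (δ + ρ) a (twBr br δ ρ b c)
          + parSign k ρ δ • twBr br ρ (γ + δ) c (twBr br γ δ a b)
          + parSign k δ γ • twBr br δ (ρ + γ) b (twBr br ρ γ c a) = 0)) := by
  refine ⟨fun γ₁ γ₂ γ₃ a₁ _ a₂ _ a₃ _ => bigraded_jacobi_eq_smul_super_jacobi br γ₁ γ₂ γ₃ a₁ a₂ a₃,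
    forall₃_congr fun γ δ ρ => ?_⟩
  refine forall₂_congr fun a _ => forall₂_congr fun b _ => forall₂_congr fun c _ => ?_
  rw [bigraded_jacobi_eq_smul_super_jacobi, smul_eq_zero]
  simp

/-- The cyclic bi-graded Jacobi expression of `[·,·]` equals, up to the sign
`(−1)^α` with `α = γ₁⁽¹⁾γ₂⁽²⁾ + γ₁⁽²⁾γ₂⁽³⁾ + γ₁⁽³⁾γ₂⁽¹⁾`, the cyclic super Jacobi
expression of the twisted bracket `[·,·]ₛ`; in particular the bi-graded Jacobi identity
holds on all homogeneous triples iff the super Jacobi identity for `[·,·]ₛ` does. -/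
theorem bigraded_jacobi_vs_super_jacobi {k V : Type*} [Field k] [AddCommGroup V] [Module k V]
    (hchar : (2 : k) ≠ 0)
    (G : ZMod 2 × ZMod 2 → Submodule k V)
    (hG : DirectSum.IsInternal G)
    (br : V →ₗ[k] V →ₗ[k] V)
    (hdeg : ∀ (γ δ : ZMod 2 × ZMod 2), ∀ a ∈ G γ, ∀ b ∈ G δ, br a b ∈ G (γ + δ)) :
    (∀ (γ₁ γ₂ γ₃ : ZMod 2 × ZMod 2), ∀ a₁ ∈ G γ₁, ∀ a₂ ∈ G γ₂, ∀ a₃ ∈ G γ₃,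
        biSign k γ₁ γ₃ • br a₁ (br a₂ a₃) + biSign k γ₃ γ₂ • br a₃ (br a₁ a₂)
            + biSign k γ₂ γ₁ • br a₂ (br a₃ a₁)
          = ((-1 : k) ^ (γ₁.1 * γ₂.2 + γ₂.1 * γ₃.2 + γ₃.1 * γ₁.2).val) •
              (parSign k γ₁ γ₃ • twBr br γ₁ (γ₂ + γ₃) a₁ (twBr br γ₂ γ₃ a₂ a₃)
                + parSign k γ₃ γ₂ • twBr br γ₃ (γ₁ + γ₂) a₃ (twBr br γ₁ γ₂ a₁ a₂)
                + parSign k γ₂ γ₁ • twBr br γ₂ (γ₃ + γ₁) a₂ (twBr br γ₃ γ₁ a₃ a₁))) ∧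
    ((∀ (γ δ ρ : ZMod 2 × ZMod 2), ∀ a ∈ G γ, ∀ b ∈ G δ, ∀ c ∈ G ρ,
        biSign k γ ρ • br a (br b c) + biSign k ρ δ • br c (br a b)
          + biSign k δ γ • br b (br c a) = 0) ↔
      (∀ (γ δ ρ : ZMod 2 × ZMod 2), ∀ a ∈ G γ, ∀ b ∈ G δ, ∀ c ∈ G ρ,
        parSign k γ ρ • twBr br γ (δ + ρ) a (twBr br δ ρ b c)
          + parSign k ρ δ • twBr br ρ (γ + δ) c (twBr br γ δ a b)
          + parSign k δ γ • twBr br δ (ρ + γ) b (twBr br ρ γ c a) = 0)) :=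
  bigraded_jacobi_vs_super_jacobi_general G br
end

section
/- Let L be a Lie algebra over a field k of characteristic ≠ 2 and let σ : L → L be a Lie algebra automorphism with σ ∘ σ = id. Define a new bilinear bracket by ⁅x,y⁆' := (1/2)·(⁅x,y⁆ + ⁅σ(x),y⁆ + ⁅x,σ(y)⁆ − ⁅σ(x),σ(y)⁆). Then ⁅·,·⁆' is antisymmetric and satisfies the Jacobi identity, hence defines a Lie algebra structure on the underlying vector space of L. Moreover ⁅x,y⁆' = ⁅x,y⁆ whenever σ(x) = x, and ⁅x,y⁆' = −⁅x,y⁆ whenever σ(x) = −x and σ(y) = −y. -/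
/-!
Write `q = id - σ`. The twisted bracket is `⁅x, y⁆ - ½⁅q x, q y⁆`, and since `σ` negates `q x` and
`q y` it fixes `⁅q x, q y⁆`; hence `q` of a twisted bracket is `q` of the original one. Expanding a
twisted double bracket this way, the twisted Jacobi sum becomes the ordinary Jacobi sum minus half
of a cyclic expression in `x, y, z, q x, q y, q z` which vanishes by four instances of the Jacobi
identity, whatever `q x, q y, q z` are.
-/

/-- The deformed bracket
`⁅x,y⁆' = (1/2)(⁅x,y⁆ + ⁅σx,y⁆ + ⁅x,σy⁆ − ⁅σx,σy⁆)` associated to a map `σ`. -/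
def twistBracket (k : Type*) {L : Type*} [Field k] [LieRing L] [LieAlgebra k L]
    (σ : L → L) (x y : L) : L :=
  (2 : k)⁻¹ • (⁅x, y⁆ + ⁅σ x, y⁆ + ⁅x, σ y⁆ - ⁅σ x, σ y⁆)

theorem cyclic_sum_lie_lie_sub_eq_zero {L : Type*} [LieRing L] (x y z u v w : L) :
    ⁅x, ⁅v, w⁆⁆ + ⁅u, ⁅y, z⁆ - ⁅y - v, z - w⁆⁆
      + (⁅z, ⁅u, v⁆⁆ + ⁅w, ⁅x, y⁆ - ⁅x - u, y - v⁆⁆)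
      + (⁅y, ⁅w, u⁆⁆ + ⁅v, ⁅z, x⁆ - ⁅z - w, x - u⁆⁆) = 0 := by
  simp only [lie_sub, sub_lie]
  linear_combination (norm := abel) lie_jacobi x v w + lie_jacobi y w u + lie_jacobi z u v
    - lie_jacobi u v w

section
variable {k L : Type*} [Field k] [LieRing L] [LieAlgebra k L]

theorem twistBracket_comm (σ : L → L) (x y : L) :
    twistBracket k σ x y = -twistBracket k σ y x := by
  rw [twistBracket, twistBracket, ← smul_neg, ← lie_skew x, ← lie_skew (σ x), ← lie_skew x (σ y),
    ← lie_skew (σ x)]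
  congr 1
  abel

variable (hchar : (2 : k) ≠ 0)
include hchar

theorem twistBracket_eq_lie_sub (σ : L → L) (x y : L) :
    twistBracket k σ x y = ⁅x, y⁆ - (2 : k)⁻¹ • ⁅x - σ x, y - σ y⁆ := by
  simp only [twistBracket, lie_sub, sub_lie]
  match_scalars
  · linear_combination mul_inv_cancel₀ hchar
  all_goals ring

theorem twistBracket_of_apply_eq_self (σ : L → L) {x : L} (hx : σ x = x) (y : L) :
    twistBracket k σ x y = ⁅x, y⁆ := by
  rw [twistBracket_eq_lie_sub hchar, hx, sub_self, zero_lie, smul_zero, sub_zero]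

theorem twistBracket_of_apply_eq_neg (σ : L → L) {x y : L} (hx : σ x = -x) (hy : σ y = -y) :
    twistBracket k σ x y = -⁅x, y⁆ := by
  simp only [twistBracket, hx, hy, neg_lie, lie_neg, neg_neg]
  match_scalars
  field_simp
  norm_num

end

section
variable {k L : Type*} [Field k] [LieRing L] [LieAlgebra k L]
  (σ : L →ₗ⁅k⁆ L) (hσ : ∀ x, σ (σ x) = x)
include hσ

theorem LieHom.apply_lie_sub_apply_of_involutive (x y : L) :
    σ ⁅x - σ x, y - σ y⁆ = ⁅x - σ x, y - σ y⁆ := by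
  rw [σ.map_lie, map_sub, map_sub, hσ, hσ, ← neg_sub x, ← neg_sub y, neg_lie, lie_neg, neg_neg]

variable (hchar : (2 : k) ≠ 0)
include hchar

theorem twistBracket_sub_apply (x y : L) :
    twistBracket k σ x y - σ (twistBracket k σ x y) = ⁅x, y⁆ - ⁅σ x, σ y⁆ := by
  rw [twistBracket_eq_lie_sub hchar, map_sub, map_smul, σ.apply_lie_sub_apply_of_involutive hσ,
    σ.map_lie]
  abel

theorem twistBracket_twistBracket (x y z : L) :
    twistBracket k σ x (twistBracket k σ y z) = ⁅x, ⁅y, z⁆⁆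
      - (2 : k)⁻¹ • (⁅x, ⁅y - σ y, z - σ z⁆⁆ + ⁅x - σ x, ⁅y, z⁆ - ⁅σ y, σ z⁆⁆) := by
  rw [twistBracket_eq_lie_sub hchar σ x, twistBracket_sub_apply σ hσ hchar,
    twistBracket_eq_lie_sub hchar σ y, lie_sub, lie_smul, smul_add]
  abel

theorem twistBracket_jacobi (x y z : L) :
    twistBracket k σ x (twistBracket k σ y z) + twistBracket k σ z (twistBracket k σ x y)
      + twistBracket k σ y (twistBracket k σ z x) = 0 := by
  simp only [twistBracket_twistBracket σ hσ hchar]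
  have key := cyclic_sum_lie_lie_sub_eq_zero x y z (x - σ x) (y - σ y) (z - σ z)
  simp only [sub_sub_cancel] at key
  linear_combination (norm := module) lie_jacobi x y z - (2 : k)⁻¹ • key

end

/-- For an involutive automorphism `σ` of a Lie algebra over a field of
characteristic `≠ 2`, the deformed bracket is antisymmetric and satisfies the
Jacobi identity (hence defines a Lie algebra structure on the same space);
it agrees with the original bracket when `σ x = x`, and equals its negative
when both arguments are in the `(−1)`-eigenspace of `σ`. -/
theorem twistBracket_lie_algebra {k L : Type*} [Field k] [LieRing L] [LieAlgebra k L]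
    (hchar : (2 : k) ≠ 0)
    (σ : L ≃ₗ⁅k⁆ L) (hσ : ∀ x, σ (σ x) = x) :
    (∀ x y : L, twistBracket k (⇑σ) x y = -twistBracket k (⇑σ) y x) ∧
    (∀ x y z : L,
        twistBracket k (⇑σ) x (twistBracket k (⇑σ) y z)
          + twistBracket k (⇑σ) z (twistBracket k (⇑σ) x y)
          + twistBracket k (⇑σ) y (twistBracket k (⇑σ) z x) = 0) ∧
    (∀ x y : L, σ x = x → twistBracket k (⇑σ) x y = ⁅x, y⁆) ∧
    (∀ x y : L, σ x = -x → σ y = -y → twistBracket k (⇑σ) x y = -⁅x, y⁆) :=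
  ⟨twistBracket_comm σ, twistBracket_jacobi σ.toLieHom hσ hchar,
    fun _ y hx ↦ twistBracket_of_apply_eq_self hchar σ hx y,
    fun _ _ hx hy ↦ twistBracket_of_apply_eq_neg hchar σ hx hy⟩
end

section
/- Equip ℝ³ (with standard basis e₁, e₂, e₃) with the bilinear bracket determined by ⁅e₁,e₂⁆ = e₃, ⁅e₂,e₃⁆ = −e₁, ⁅e₃,e₁⁆ = e₂ and antisymmetry, i.e. ⁅x,y⁆ = (−(x₂y₃ − x₃y₂), x₃y₁ − x₁y₃, x₁y₂ − x₂y₁). Then this bracket satisfies the Jacobi identity, making ℝ³ a real Lie algebra, and this Lie algebra is isomorphic (as a Lie algebra over ℝ) to so(1,2) := { X : Matrix (Fin 3) (Fin 3) ℝ | Xᵀ * η + η * X = 0 }, where η = diagonal (1, −1, −1), with the commutator bracket ⁅X,Y⁆ = XY − YX. -/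
/-!
The map `x ↦ !![0, x₁, x₂; x₁, 0, -x₀; x₂, x₀, 0]` is a linear bijection of `ℝ³` onto `so(1,2)`:
entrywise, `Xᵀη + ηX = 0` reads `η_j X_ji + η_i X_ij = 0`, so `X` has zero diagonal, is symmetric
in the entries linking index `0` with `1, 2` and antisymmetric in the `1, 2` block. A direct
computation shows that it carries the twisted bracket to the matrix commutator, and the Jacobi
identity for the twisted bracket is then inherited from the commutator through injectivity.
-/

open Matrix

/-- The twisted cross-product bracket on `ℝ³`:
`⁅x,y⁆ = (−(x₂y₃ − x₃y₂), x₃y₁ − x₁y₃, x₁y₂ − x₂y₁)` (1-based indexing). -/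
def br3 (x y : Fin 3 → ℝ) : Fin 3 → ℝ :=
  ![-(x 1 * y 2 - x 2 * y 1), x 2 * y 0 - x 0 * y 2, x 0 * y 1 - x 1 * y 0]

def eta12 : Matrix (Fin 3) (Fin 3) ℝ := Matrix.diagonal ![1, -1, -1]

attribute [local instance] LieRing.ofAssociativeRing

theorem jacobi_of_injective_of_map_lie {V L F : Type*} [AddCommGroup V] [LieRing L]
    [FunLike F V L] [AddMonoidHomClass F V L] (f : F) (hf : Function.Injective f)
    (b : V → V → V) (hb : ∀ x y, f (b x y) = ⁅f x, f y⁆) (x y z : V) :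
    b x (b y z) + b z (b x y) + b y (b z x) = 0 := by
  apply hf
  simp only [map_add, hb, map_zero]
  rw [← lie_jacobi (f x) (f y) (f z)]
  abel

theorem transpose_mul_diagonal_add_diagonal_mul_apply {n α : Type*} [DecidableEq n] [Fintype n]
    [CommRing α] (X : Matrix n n α) (d : n → α) (i j : n) :
    (Xᵀ * diagonal d + diagonal d * X) i j = d j * X j i + d i * X i j := by
  simp [mul_diagonal, diagonal_mul, mul_comm]

def toSo12 : (Fin 3 → ℝ) →ₗ[ℝ] Matrix (Fin 3) (Fin 3) ℝ where
  toFun x := !![0, x 1, x 2; x 1, 0, -x 0; x 2, x 0, 0]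
  map_add' x y := by ext i j; fin_cases i <;> fin_cases j <;> simp [add_comm]
  map_smul' c x := by ext i j; fin_cases i <;> fin_cases j <;> simp

theorem toSo12_apply (x : Fin 3 → ℝ) :
    toSo12 x = !![0, x 1, x 2; x 1, 0, -x 0; x 2, x 0, 0] := rfl

def so12Coords (X : Matrix (Fin 3) (Fin 3) ℝ) : Fin 3 → ℝ := ![X 2 1, X 0 1, X 0 2]

theorem so12Coords_toSo12 : Function.LeftInverse so12Coords toSo12 := by
  intro x
  ext i
  fin_cases i <;> rfl

theorem toSo12_mem_so12 (x : Fin 3 → ℝ) : (toSo12 x)ᵀ * eta12 + eta12 * toSo12 x = 0 := by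
  ext i j
  rw [eta12, transpose_mul_diagonal_add_diagonal_mul_apply]
  fin_cases i <;> fin_cases j <;> simp [toSo12_apply]

theorem toSo12_so12Coords {X : Matrix (Fin 3) (Fin 3) ℝ} (hX : Xᵀ * eta12 + eta12 * X = 0) :
    toSo12 (so12Coords X) = X := by
  have h : ∀ i j, ![1, -1, -1] j * X j i + ![1, -1, -1] i * X i j = (0 : ℝ) := fun i j => by
    simpa only [eta12, transpose_mul_diagonal_add_diagonal_mul_apply, Matrix.zero_apply]
      using congrFun (congrFun hX i) j
  have h00 : X 0 0 = 0 := by simpa using h 0 0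
  have h11 : X 1 1 = 0 := by simpa using h 1 1
  have h22 : X 2 2 = 0 := by simpa using h 2 2
  have h10 : X 1 0 = X 0 1 := by simpa [neg_add_eq_zero] using h 0 1
  have h20 : X 2 0 = X 0 2 := by simpa [neg_add_eq_zero] using h 0 2
  have h12 : X 1 2 = -X 2 1 := by simpa [neg_add_eq_zero] using h 2 1
  conv_rhs => rw [eta_fin_three X, h00, h11, h22, h10, h20, h12]
  rfl

theorem toSo12_br3 (x y : Fin 3 → ℝ) :
    toSo12 (br3 x y) = toSo12 x * toSo12 y - toSo12 y * toSo12 x := by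
  ext i j
  fin_cases i <;> fin_cases j <;> simp [toSo12_apply, br3] <;> ring

/-- The twisted bracket `br3` on `ℝ³` satisfies the Jacobi identity (so it makes `ℝ³`
a real Lie algebra), and the resulting Lie algebra is isomorphic to
`so(1,2) = {X | Xᵀη + ηX = 0}` with the commutator bracket: there is an injective
linear map `φ` from `ℝ³` onto `so(1,2)` intertwining `br3` with the commutator. -/
theorem twisted_so3_jacobi_and_iso_so12 :
    (∀ x y z : Fin 3 → ℝ, br3 x (br3 y z) + br3 z (br3 x y) + br3 y (br3 z x) = 0) ∧
    ∃ φ : (Fin 3 → ℝ) →ₗ[ℝ] Matrix (Fin 3) (Fin 3) ℝ,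
      Function.Injective φ ∧
      (∀ x : Fin 3 → ℝ, (φ x)ᵀ * eta12 + eta12 * φ x = 0) ∧
      (∀ X : Matrix (Fin 3) (Fin 3) ℝ, Xᵀ * eta12 + eta12 * X = 0 → ∃ x, φ x = X) ∧
      (∀ x y : Fin 3 → ℝ, φ (br3 x y) = φ x * φ y - φ y * φ x) :=
  ⟨jacobi_of_injective_of_map_lie toSo12 so12Coords_toSo12.injective br3 fun x y => by
      rw [Ring.lie_def, toSo12_br3],
    toSo12, so12Coords_toSo12.injective, toSo12_mem_so12,
    fun _ hX => ⟨_, toSo12_so12Coords hX⟩, toSo12_br3⟩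
end

section
/- Let C^∞(ℝ,ℝ) be the ℝ-algebra of smooth functions ℝ → ℝ (pointwise operations). Then every ℝ-algebra homomorphism φ : C^∞(ℝ,ℝ) → ℂ takes only real values: for every smooth f, the imaginary part of φ(f) is zero. In particular there is no surjective ℝ-algebra homomorphism from C^∞(ℝ,ℝ) onto ℂ. -/
/-- The `ℝ`-algebra `C^∞(ℝ,ℝ)` of smooth real functions, as a subalgebra of `ℝ → ℝ`. -/
def SmoothR : Subalgebra ℝ (ℝ → ℝ) where
  carrier := {f | ContDiff ℝ (⊤ : ℕ∞) f}
  mul_mem' := by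
    intro f g hf hg
    rw [Set.mem_setOf_eq] at hf hg ⊢
    exact hf.mul hg
  one_mem' := by
    rw [Set.mem_setOf_eq]
    exact contDiff_const
  add_mem' := by
    intro f g hf hg
    rw [Set.mem_setOf_eq] at hf hg ⊢
    exact hf.add hg
  zero_mem' := by
    rw [Set.mem_setOf_eq]
    exact contDiff_const
  algebraMap_mem' := by
    intro c
    rw [Set.mem_setOf_eq]
    exact contDiff_const

/-! An `ℝ`-algebra homomorphism `φ : A → ℂ` sends `(a - t)² + s²`, with `t + s i = φ a`, to zero.
In `C^∞(ℝ,ℝ)` this element is a nowhere vanishing smooth function when `s ≠ 0`, hence a unit,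
so `s = 0`. -/

theorem Complex.sub_re_sq_add_im_sq (z : ℂ) : (z - z.re) ^ 2 + (z.im : ℂ) ^ 2 = 0 := by
  have hz : z - z.re = z.im * I := by
    apply Complex.ext <;> simp
  rw [hz, mul_pow, I_sq]
  ring

theorem AlgHom.im_eq_zero_of_isUnit_sub_sq_add_sq {A : Type*} [Ring A] [Algebra ℝ A]
    (φ : A →ₐ[ℝ] ℂ) (a : A)
    (hunit : ∀ t s : ℝ, s ≠ 0 → IsUnit ((a - algebraMap ℝ A t) ^ 2 + algebraMap ℝ A (s ^ 2))) :
    (φ a).im = 0 := by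
  by_contra him
  have hzero : φ ((a - algebraMap ℝ A (φ a).re) ^ 2 + algebraMap ℝ A ((φ a).im ^ 2)) = 0 := by
    simpa only [map_add, map_pow, map_sub, AlgHom.commutes, Complex.coe_algebraMap,
      Complex.ofReal_pow] using Complex.sub_re_sq_add_im_sq (φ a)
  have hunit_image := (hunit (φ a).re _ him).map φ
  rw [hzero] at hunit_image
  exact not_isUnit_zero hunit_image

namespace SmoothR

theorem isUnit_of_forall_ne_zero (g : SmoothR) (hg : ∀ x, (g : ℝ → ℝ) x ≠ 0) : IsUnit g := by
  have hsmooth : ContDiff ℝ (⊤ : ℕ∞) (g : ℝ → ℝ) := g.2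
  exact IsUnit.of_mul_eq_one ⟨_, hsmooth.inv hg⟩
    (Subtype.ext (funext fun x => mul_inv_cancel₀ (hg x)))

theorem isUnit_sub_sq_add_sq (f : SmoothR) (t s : ℝ) (hs : s ≠ 0) :
    IsUnit ((f - algebraMap ℝ SmoothR t) ^ 2 + algebraMap ℝ SmoothR (s ^ 2)) :=
  isUnit_of_forall_ne_zero _ fun x => by
    change ((f : ℝ → ℝ) x - t) ^ 2 + s ^ 2 ≠ 0
    positivity

end SmoothR

/-- Every `ℝ`-algebra homomorphism `C^∞(ℝ,ℝ) → ℂ` takes only real values; in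
particular there is no surjective `ℝ`-algebra homomorphism `C^∞(ℝ,ℝ) → ℂ`. -/
theorem algHom_smooth_to_complex_real_valued :
    (∀ φ : SmoothR →ₐ[ℝ] ℂ, ∀ f : SmoothR, (φ f).im = 0) ∧
    ¬∃ φ : SmoothR →ₐ[ℝ] ℂ, Function.Surjective φ := by
  have real_valued (φ : SmoothR →ₐ[ℝ] ℂ) (f : SmoothR) : (φ f).im = 0 :=
    φ.im_eq_zero_of_isUnit_sub_sq_add_sq f (SmoothR.isUnit_sub_sq_add_sq f)
  refine ⟨real_valued, ?_⟩
  rintro ⟨φ, hsurj⟩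
  obtain ⟨f, hf⟩ := hsurj Complex.I
  simpa [hf] using real_valued φ f
end

section
/- Let C^∞(ℝ,ℝ) be the ℝ-algebra of smooth functions ℝ → ℝ and let A be the ℝ-algebra of smooth functions g : ℝ → ℂ with g(−x) = conj(g(x)) for all x (both with pointwise operations). Then there is no ℝ-algebra isomorphism between A and C^∞(ℝ,ℝ). -/
/-- The `ℝ`-algebra `A` of smooth functions `g : ℝ → ℂ` with `g(−x) = conj (g x)`,
as a subalgebra of `ℝ → ℂ`. -/
def ConjSymm : Subalgebra ℝ (ℝ → ℂ) where
  carrier := {g | ContDiff ℝ (⊤ : ℕ∞) g ∧ ∀ x : ℝ, g (-x) = starRingEnd ℂ (g x)}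
  mul_mem' := by
    intro f g hf hg
    rw [Set.mem_setOf_eq] at hf hg ⊢
    exact ⟨hf.1.mul hg.1, fun x => by
      simp only [Pi.mul_apply, hf.2 x, hg.2 x, map_mul]⟩
  one_mem' := by
    rw [Set.mem_setOf_eq]
    exact ⟨contDiff_const, fun x => by simp⟩
  add_mem' := by
    intro f g hf hg
    rw [Set.mem_setOf_eq] at hf hg ⊢
    exact ⟨hf.1.add hg.1, fun x => by
      simp only [Pi.add_apply, hf.2 x, hg.2 x, map_add]⟩
  zero_mem' := by
    rw [Set.mem_setOf_eq]
    exact ⟨contDiff_const, fun x => by simp⟩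
  algebraMap_mem' := by
    intro c
    rw [Set.mem_setOf_eq]
    refine ⟨contDiff_const, fun x => ?_⟩
    simp [Algebra.algebraMap_eq_smul_one]

/-!
In `C^∞(ℝ,ℝ)` every `f ^ 2 + 1` is invertible, since `1 / (f ^ 2 + 1)` is again smooth.
This is preserved by algebra isomorphisms but fails in `A`: for `g x = x * i` the function
`g ^ 2 + 1 = 1 - x ^ 2` vanishes at `x = 1`, so it is not a unit.
-/

open Complex

theorem Subalgebra.apply_ne_zero_of_isUnit {R X K : Type*} [CommSemiring R] [Semiring K]
    [Nontrivial K] [Algebra R K] {S : Subalgebra R (X → K)} {g : S} (hg : IsUnit g) (x : X) :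
    (g : X → K) x ≠ 0 :=
  ((hg.map S.val).map (Pi.evalRingHom (fun _ : X => K) x)).ne_zero

theorem SmoothR.contDiff (f : SmoothR) : ContDiff ℝ (⊤ : ℕ∞) (f : ℝ → ℝ) := f.2

theorem SmoothR.isUnit_of_forall_ne_zero_s16 {f : SmoothR} (hf : ∀ x, (f : ℝ → ℝ) x ≠ 0) :
    IsUnit f :=
  IsUnit.of_mul_eq_one ⟨fun x => ((f : ℝ → ℝ) x)⁻¹, (SmoothR.contDiff f).inv hf⟩
    (Subtype.ext <| funext fun x => mul_inv_cancel₀ (hf x))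

theorem SmoothR.isUnit_sq_add_one (f : SmoothR) : IsUnit (f ^ 2 + 1) :=
  isUnit_of_forall_ne_zero_s16 fun x => by
    simp only [Subalgebra.coe_add, Subalgebra.coe_pow, Subalgebra.coe_one, Pi.add_apply,
      Pi.pow_apply, Pi.one_apply]
    positivity

def ConjSymm.mulI : ConjSymm :=
  ⟨fun x => x * I, ofRealCLM.contDiff.mul contDiff_const, fun x => by simp⟩

theorem ConjSymm.not_isUnit_sq_add_one_mulI : ¬IsUnit (mulI ^ 2 + 1) := fun h =>
  Subalgebra.apply_ne_zero_of_isUnit h 1 (by simp [mulI])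

/-- There is no `ℝ`-algebra isomorphism between `A` and `C^∞(ℝ,ℝ)`. -/
theorem no_algEquiv_ConjSymm_SmoothR : IsEmpty (ConjSymm ≃ₐ[ℝ] SmoothR) :=
  ⟨fun e => ConjSymm.not_isUnit_sq_add_one_mulI <| by
    simpa using (SmoothR.isUnit_sq_add_one (e ConjSymm.mulI)).map e.symm⟩
end
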